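/- arXiv:1402.2049 — 2 statements merged into one kernel-verified Lean document; each statement's English description precedes it below -/
import Mathlib

section
/- Let Λ be a lattice of signature (1, n−1), C⁺ a connected component of the positive cone, and P a 2-plane in Λ_ℝ defined over ℚ which contains a nonzero rational isotropic vector. Then for any positive integer N, the set {v ∈ Λ : (v,v) > −N and v^⊥ ∩ P ∩ C⁺ ≠ ∅} is finite. -/
/-!
Rescale the rational isotropic vector `x` and a rational `w ∈ P` with `(x, w) ≠ 0` to lattice
vectors `e`, `w`; then `f = (w, w) e - 2 (e, w) w` is a second isotropic lattice vector, and
`e, f` span `P` with `β = (e, f) ≠ 0`. If `v` is orthogonal to a positive `y ∈ P`, then so is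
`β v - (v, f) e - (v, e) f`, whose square is therefore `≤ 0`; this gives
`2 |(v, e) (v, f)| ≤ -|β| (v, v) < |β| N`. The integers `(v, e)` and `(v, f)` vanish
simultaneously, so both are bounded, hence so is `(v, y₀)` for the positive vector
`y₀ = e + β f`. Since the form is negative definite on `y₀^⊥`, the quadratic form
`2 (y₀, v)² - (y₀, y₀) (v, v)` is positive definite, so `v` ranges over a bounded set of lattice
points.
-/

open Submodule

section Hyperbolic

variable {E : Type*} [AddCommGroup E] [Module ℝ E] (B : E →ₗ[ℝ] E →ₗ[ℝ] ℝ)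

theorem apply_self_nonpos_of_apply_eq_zero
    (hsig : ∀ x, 0 < B x x → ∀ y, y ≠ 0 → B x y = 0 → B y y < 0)
    {y u : E} (hy : 0 < B y y) (hyu : B y u = 0) : B u u ≤ 0 := by
  rcases eq_or_ne u 0 with rfl | hu
  · simp
  · exact (hsig y hy u hu hyu).le

theorem apply_ne_zero_of_isotropic
    (hsig : ∀ x, 0 < B x x → ∀ y, y ≠ 0 → B x y = 0 → B y y < 0)
    {y x : E} (hy : 0 < B y y) (hx0 : x ≠ 0) (hx : B x x = 0) : B y x ≠ 0 :=
  fun hyx => (hsig y hy x hx0 hyx).ne hx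

theorem pos_two_mul_apply_sq_sub_of_ne_zero (hsym : ∀ x y, B x y = B y x)
    (hsig : ∀ x, 0 < B x x → ∀ y, y ≠ 0 → B x y = 0 → B y y < 0)
    {y u : E} (hy : 0 < B y y) (hu : u ≠ 0) : 0 < 2 * B y u ^ 2 - B y y * B u u := by
  -- `B y y • u - B y u • y` is orthogonal to `y`, so its square is nonpositive
  have hproj : B y y * B u u ≤ B y u ^ 2 := by
    have := apply_self_nonpos_of_apply_eq_zero B hsig hy
      (u := B y y • u - B y u • y) (by simp only [map_sub, map_smul, smul_eq_mul]; ring)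
    simp only [map_sub, map_smul, LinearMap.sub_apply, LinearMap.smul_apply, smul_eq_mul,
      hsym u y] at this
    nlinarith
  rcases eq_or_ne (B y u) 0 with hyu | hyu
  · have := hsig y hy u hu hyu
    rw [hyu]
    nlinarith
  · have := pow_pos (abs_pos.mpr hyu) 2
    rw [sq_abs] at this
    linarith

def isotropicPartner (e w : E) : E := B w w • e - (2 * B e w) • w

variable {B}

theorem isotropicPartner_apply_self (hsym : ∀ x y, B x y = B y x) {e : E} (he : B e e = 0)
    (w : E) : B (isotropicPartner B e w) (isotropicPartner B e w) = 0 := by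
  simp only [isotropicPartner, map_sub, map_smul, LinearMap.sub_apply, LinearMap.smul_apply,
    smul_eq_mul, he, hsym w e]
  ring

theorem apply_isotropicPartner {e : E} (he : B e e = 0) (w : E) :
    B e (isotropicPartner B e w) = -2 * B e w ^ 2 := by
  simp only [isotropicPartner, map_sub, map_smul, smul_eq_mul, he]
  ring

theorem linearIndependent_pair_of_isotropic {e f : E} (he : B e e = 0) (hef : B e f ≠ 0) :
    LinearIndependent ℝ ![e, f] := by
  rw [LinearIndependent.pair_iff]
  intro s t hst
  have ht : t = 0 := by
    have := congrArg (B e) hst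
    simp only [map_add, map_smul, smul_eq_mul, he, map_zero] at this
    exact (mul_eq_zero.mp (by linarith : t * B e f = 0)).resolve_right hef
  refine ⟨?_, ht⟩
  have he0 : e ≠ 0 := by rintro rfl; simp at hef
  simpa [ht, he0] using hst

section IsotropicPair

variable (hsym : ∀ x y, B x y = B y x) {e f : E} (he : B e e = 0) (hf : B f f = 0)
  {a d : ℝ} {v : E} (hpos : 0 < B (a • e + d • f) (a • e + d • f))
  (hv : B v (a • e + d • f) = 0)
include hsym he hf hpos

theorem mul_apply_pos_of_isotropic_pair : 0 < a * d * B e f := by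
  simp only [map_add, map_smul, LinearMap.add_apply, LinearMap.smul_apply, smul_eq_mul, he, hf,
    hsym f e] at hpos
  linarith

include hv

theorem apply_eq_zero_iff_of_isotropic_pair : B v e = 0 ↔ B v f = 0 := by
  have had := mul_apply_pos_of_isotropic_pair hsym he hf hpos
  have ha : a ≠ 0 := by rintro rfl; simp at had
  have hd : d ≠ 0 := by rintro rfl; simp at had
  simp only [map_add, map_smul, smul_eq_mul] at hv
  constructor <;> intro h0 <;> simp_all

theorem two_mul_abs_mul_le_of_isotropic_pair
    (hsig : ∀ x, 0 < B x x → ∀ y, y ≠ 0 → B x y = 0 → B y y < 0) :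
    2 * |B v e * B v f| ≤ -(|B e f| * B v v) := by
  have had := mul_apply_pos_of_isotropic_pair hsym he hf hpos
  set β := B e f
  -- `β • v - B v f • e - B v e • f` is orthogonal to `e` and `f`, hence to the positive vector
  have hu := apply_self_nonpos_of_apply_eq_zero B hsig hpos
    (u := β • v - B v f • e - B v e • f) (by
      simp only [map_add, map_sub, map_smul, LinearMap.add_apply, LinearMap.smul_apply,
        smul_eq_mul, he, hf, hsym f e, hsym e v, hsym f v]
      ring)
  simp only [map_sub, map_smul, LinearMap.sub_apply, LinearMap.smul_apply, smul_eq_mul, he, hf,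
    hsym f e, hsym e v, hsym f v] at hu
  -- `a * B v e = - d * B v f` and `a * d` has the sign of `β`, so `β * B v e * B v f ≤ 0`
  have hsign : β * (B v e * B v f) ≤ 0 := by
    simp only [map_add, map_smul, smul_eq_mul] at hv
    have h1 : a * d * (B v e * B v f) ≤ 0 := by
      have hae : a * B v e = -(d * B v f) := by linarith
      have : a * d * (B v e * B v f) = -(d * B v f) ^ 2 := by
        rw [show a * d * (B v e * B v f) = a * B v e * (d * B v f) by ring, hae]
        ring
      linarith [sq_nonneg (d * B v f)]
    by_contra! h
    nlinarith [mul_pos had h, mul_nonpos_of_nonneg_of_nonpos (sq_nonneg β) h1]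
  rcases lt_trichotomy β 0 with hβ | hβ | hβ
  · have : 0 ≤ B v e * B v f := by nlinarith
    rw [abs_of_neg hβ, abs_of_nonneg this]
    nlinarith
  · simp [hβ] at had
  · have : B v e * B v f ≤ 0 := by nlinarith
    rw [abs_of_pos hβ, abs_of_nonpos this]
    nlinarith

end IsotropicPair

end Hyperbolic

theorem exists_pos_mul_norm_sq_le {E : Type*} [NormedAddCommGroup E] [NormedSpace ℝ E]
    [FiniteDimensional ℝ E] {Q : E → ℝ} (hQ : Continuous Q)
    (hhom : ∀ (c : ℝ) u, Q (c • u) = c ^ 2 * Q u) (hpos : ∀ u, u ≠ 0 → 0 < Q u) :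
    ∃ ε > 0, ∀ u, ε * ‖u‖ ^ 2 ≤ Q u := by
  have hQ0 : Q 0 = 0 := by simpa using hhom 0 0
  cases subsingleton_or_nontrivial E with
  | inl _ => exact ⟨1, one_pos, fun u => by simp [Subsingleton.elim u 0, hQ0]⟩
  | inr _ =>
    obtain ⟨u₀, hu₀, hmin⟩ := (isCompact_sphere (0 : E) 1).exists_isMinOn
      (NormedSpace.sphere_nonempty.mpr zero_le_one) hQ.continuousOn
    have hu₀0 : u₀ ≠ 0 := ne_zero_of_mem_unit_sphere ⟨u₀, hu₀⟩
    refine ⟨Q u₀, hpos u₀ hu₀0, fun u => ?_⟩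
    rcases eq_or_ne u 0 with rfl | hu
    · simp [hQ0]
    have hnu : 0 < ‖u‖ := norm_pos_iff.mpr hu
    have hmem : ‖u‖⁻¹ • u ∈ Metric.sphere (0 : E) 1 := by
      rw [mem_sphere_zero_iff_norm, norm_smul, norm_inv, norm_norm, inv_mul_cancel₀ hnu.ne']
    have : Q u₀ ≤ Q (‖u‖⁻¹ • u) := hmin hmem
    rw [hhom, inv_pow, inv_mul_eq_div, le_div_iff₀ (by positivity)] at this
    exact this

section Bounded

variable {E : Type*} [NormedAddCommGroup E] [NormedSpace ℝ E] [FiniteDimensional ℝ E]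
  {B : E →ₗ[ℝ] E →ₗ[ℝ] ℝ}

theorem isBounded_setOf_neg_lt_apply_self_and_abs_apply_le (hsym : ∀ x y, B x y = B y x)
    (hsig : ∀ x, 0 < B x x → ∀ y, y ≠ 0 → B x y = 0 → B y y < 0)
    {y : E} (hy : 0 < B y y) (N M : ℝ) :
    Bornology.IsBounded {v | -N < B v v ∧ |B y v| ≤ M} := by
  have hcont : Continuous fun u => 2 * B y u ^ 2 - B y y * B u u := by
    have := B.toContinuousBilinearMap.continuous₂
    simp only [← LinearMap.toContinuousBilinearMap_apply]
    fun_prop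
  obtain ⟨ε, hε, hcoer⟩ := exists_pos_mul_norm_sq_le hcont
    (fun c u => by simp only [map_smul, LinearMap.smul_apply, smul_eq_mul]; ring)
    (fun u hu => pos_two_mul_apply_sq_sub_of_ne_zero B hsym hsig hy hu)
  refine isBounded_iff_forall_norm_le.mpr ⟨√((2 * M ^ 2 + B y y * N) / ε), ?_⟩
  rintro v ⟨hvv, hyv⟩
  refine Real.le_sqrt_of_sq_le ((le_div_iff₀ hε).mpr ?_)
  have : B y v ^ 2 ≤ M ^ 2 := sq_le_sq' (abs_le.mp hyv).1 (abs_le.mp hyv).2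
  nlinarith [hcoer v]

end Bounded

section Lattice

variable {E ι : Type*} [AddCommGroup E] [Module ℝ E] {B : E →ₗ[ℝ] E →ₗ[ℝ] ℝ}

theorem exists_int_apply_eq_of_mem_span_int {b : ι → E}
    (hint : ∀ i j, ∃ m : ℤ, B (b i) (b j) = m) {u v : E}
    (hu : u ∈ span ℤ (Set.range b)) (hv : v ∈ span ℤ (Set.range b)) :
    ∃ m : ℤ, B u v = m := by
  induction hu, hv using span_induction₂ with
  | mem_mem x y hx hy =>
    obtain ⟨i, rfl⟩ := hx
    obtain ⟨j, rfl⟩ := hy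
    exact hint i j
  | zero_left | zero_right => exact ⟨0, by simp⟩
  | add_left _ _ _ _ _ _ h₁ h₂ | add_right _ _ _ _ _ _ h₁ h₂ =>
    obtain ⟨m₁, e₁⟩ := h₁
    obtain ⟨m₂, e₂⟩ := h₂
    exact ⟨m₁ + m₂, by simp [e₁, e₂]⟩
  | smul_left r _ _ _ _ h | smul_right r _ _ _ _ h =>
    obtain ⟨m, e⟩ := h
    exact ⟨r * m, by simp [e]⟩

theorem exists_nat_smul_mem_span_int [Fintype ι] (b : ι → E) {u : E}
    (hu : ∃ c : ι → ℚ, u = ∑ j, (c j : ℝ) • b j) :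
    ∃ k : ℕ, 0 < k ∧ (k : ℝ) • u ∈ span ℤ (Set.range b) := by
  obtain ⟨c, rfl⟩ := hu
  refine ⟨∏ j, (c j).den, Finset.prod_pos fun j _ => (c j).pos, ?_⟩
  rw [Finset.smul_sum]
  refine sum_mem fun j _ => ?_
  obtain ⟨m, hm⟩ : (c j).den ∣ ∏ i, (c i).den := Finset.dvd_prod_of_mem _ (Finset.mem_univ j)
  have : ((∏ i, (c i).den : ℕ) : ℝ) * (c j : ℝ) = ((c j).num * m : ℤ) := by
    rw [hm, Rat.cast_def]
    push_cast
    field_simp [(Nat.cast_ne_zero.mpr (c j).den_nz : ((c j).den : ℝ) ≠ 0)]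
  rw [smul_smul, this, Int.cast_smul_eq_zsmul]
  exact zsmul_mem (subset_span (Set.mem_range_self j)) _


theorem isotropicPartner_mem_span_int {b : ι → E}
    (hint : ∀ i j, ∃ m : ℤ, B (b i) (b j) = m) {e w : E}
    (he : e ∈ span ℤ (Set.range b)) (hw : w ∈ span ℤ (Set.range b)) :
    isotropicPartner B e w ∈ span ℤ (Set.range b) := by
  obtain ⟨m₁, hm₁⟩ := exists_int_apply_eq_of_mem_span_int hint hw hw
  obtain ⟨m₂, hm₂⟩ := exists_int_apply_eq_of_mem_span_int hint he hw
  rw [isotropicPartner, hm₁, hm₂, show (2 * m₂ : ℝ) = (2 * m₂ : ℤ) by push_cast; ring,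
    Int.cast_smul_eq_zsmul, Int.cast_smul_eq_zsmul]
  exact sub_mem (zsmul_mem he _) (zsmul_mem hw _)

end Lattice

theorem span_pair_eq_of_linearIndependent {K V : Type*} [DivisionRing K] [AddCommGroup V]
    [Module K V] {e f p q : V} (hef : LinearIndependent K ![e, f])
    (he : e ∈ span K {p, q}) (hf : f ∈ span K {p, q}) : span K {e, f} = span K {p, q} := by
  have : FiniteDimensional K (span K {p, q}) := .span_of_finite K (Set.toFinite _)
  refine eq_of_le_of_finrank_le (span_le.mpr (Set.pair_subset he hf)) ?_
  have h₁ := finrank_range_le_card (R := K) ![p, q]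
  have h₂ := finrank_span_eq_card hef
  rw [Matrix.range_cons_cons_empty] at h₁ h₂
  rw [h₂]
  exact h₁

theorem Int.abs_le_abs_mul_of_eq_zero_iff {m k : ℤ} (h : m = 0 ↔ k = 0) : |m| ≤ |m * k| := by
  rcases eq_or_ne k 0 with rfl | hk
  · simp [h.mpr rfl]
  · rw [abs_mul]
    exact le_mul_of_one_le_right (abs_nonneg m) (Int.one_le_abs hk)

theorem finite_setOf_orthogonal_in_isotropic_plane {E ι : Type*} [NormedAddCommGroup E]
    [NormedSpace ℝ E] [FiniteDimensional ℝ E] [Finite ι] {B : E →ₗ[ℝ] E →ₗ[ℝ] ℝ}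
    (hsym : ∀ x y, B x y = B y x)
    (hsig : ∀ x, 0 < B x x → ∀ y, y ≠ 0 → B x y = 0 → B y y < 0)
    (b : Module.Basis ι ℝ E) (hint : ∀ i j, ∃ m : ℤ, B (b i) (b j) = m) {e f : E}
    (heL : e ∈ span ℤ (Set.range b)) (hfL : f ∈ span ℤ (Set.range b))
    (he : B e e = 0) (hf : B f f = 0) (hef : B e f ≠ 0) (N : ℝ) :
    {v | v ∈ span ℤ (Set.range b) ∧ -N < B v v ∧
      ∃ y ∈ span ℝ {e, f}, B v y = 0 ∧ 0 < B y y}.Finite := by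
  set β := B e f
  have hy₀ : 0 < B (e + β • f) (e + β • f) := by
    simp only [map_add, map_smul, LinearMap.add_apply, LinearMap.smul_apply, smul_eq_mul, he, hf,
      hsym f e]
    nlinarith [sq_pos_of_ne_zero hef]
  refine (ZSpan.setFinite_inter b (isBounded_setOf_neg_lt_apply_self_and_abs_apply_le hsym hsig
    hy₀ N ((1 + |β|) * (|β| * N / 2)))).subset ?_
  rintro v ⟨hvL, hvN, y, hy, hvy, hyy⟩
  refine ⟨⟨hvN, ?_⟩, hvL⟩
  obtain ⟨a, d, rfl⟩ := mem_span_pair.mp hy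
  obtain ⟨z₁, hz₁⟩ := exists_int_apply_eq_of_mem_span_int hint hvL heL
  obtain ⟨z₂, hz₂⟩ := exists_int_apply_eq_of_mem_span_int hint hvL hfL
  have hprod := two_mul_abs_mul_le_of_isotropic_pair hsym he hf hyy hvy hsig
  have hiff := apply_eq_zero_iff_of_isotropic_pair hsym he hf hyy hvy
  rw [hz₁, hz₂] at hprod hiff
  have hiff' : z₁ = 0 ↔ z₂ = 0 := by exact_mod_cast hiff
  have h₁ : |(z₁ : ℝ)| ≤ |(z₁ : ℝ) * z₂| := by
    exact_mod_cast Int.abs_le_abs_mul_of_eq_zero_iff hiff'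
  have h₂ : |(z₂ : ℝ)| ≤ |(z₁ : ℝ) * z₂| := by
    rw [mul_comm]
    exact_mod_cast Int.abs_le_abs_mul_of_eq_zero_iff hiff'.symm
  have hK : |(z₁ : ℝ) * z₂| ≤ |β| * N / 2 := by
    nlinarith [mul_le_mul_of_nonneg_left hvN.le (abs_nonneg β)]
  have hy₀v : B (e + β • f) v = z₁ + β * z₂ := by
    simp only [map_add, map_smul, LinearMap.add_apply, LinearMap.smul_apply, smul_eq_mul,
      hsym e v, hsym f v, hz₁, hz₂]
  rw [hy₀v]
  calc |(z₁ : ℝ) + β * z₂| ≤ |(z₁ : ℝ)| + |β| * |(z₂ : ℝ)| := by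
        rw [← abs_mul]; exact abs_add_le _ _
    _ ≤ (1 + |β|) * (|β| * N / 2) := by nlinarith [abs_nonneg β]

theorem stmt3_general (n : ℕ)
    (B : EuclideanSpace ℝ (Fin n) →ₗ[ℝ] EuclideanSpace ℝ (Fin n) →ₗ[ℝ] ℝ)
    (hsym : ∀ x y, B x y = B y x)
    (hsig : ∀ x, 0 < B x x → ∀ y, y ≠ 0 → B x y = 0 → B y y < 0)
    (b : Module.Basis (Fin n) ℝ (EuclideanSpace ℝ (Fin n)))
    (hint : ∀ i j, ∃ m : ℤ, B (b i) (b j) = (m : ℝ))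
    (h : EuclideanSpace ℝ (Fin n))
    -- the rational 2-plane P, spanned by rational vectors p, q
    (p q : EuclideanSpace ℝ (Fin n))
    (hpQ : ∃ c : Fin n → ℚ, p = ∑ j, (c j : ℝ) • b j)
    (hqQ : ∃ c : Fin n → ℚ, q = ∑ j, (c j : ℝ) • b j)
    -- a nonzero rational isotropic vector of P
    (x : EuclideanSpace ℝ (Fin n))
    (hxP : x ∈ Submodule.span ℝ ({p, q} : Set (EuclideanSpace ℝ (Fin n))))
    (hxQ : ∃ c : Fin n → ℚ, x = ∑ j, (c j : ℝ) • b j)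
    (hx0 : x ≠ 0) (hxiso : B x x = 0)
    (N : ℕ) :
    {v : EuclideanSpace ℝ (Fin n) | v ∈ Submodule.span ℤ (Set.range b) ∧
      -(N : ℝ) < B v v ∧
      ∃ y, y ∈ Submodule.span ℝ ({p, q} : Set (EuclideanSpace ℝ (Fin n))) ∧
        B v y = 0 ∧ 0 < B y y ∧ 0 < B y h}.Finite := by
  by_cases hpos : ∃ y ∈ span ℝ {p, q}, 0 < B y y
  swap
  · exact Set.finite_empty.subset fun v ⟨_, _, y, hyP, _, hyy, _⟩ => hpos ⟨y, hyP, hyy⟩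
  obtain ⟨y₀, hy₀P, hy₀⟩ := hpos
  obtain ⟨w, hw, hxw⟩ : ∃ w ∈ ({p, q} : Set _), B x w ≠ 0 := by
    by_contra! hxpq
    refine apply_ne_zero_of_isotropic B hsig hy₀ hx0 hxiso ?_
    rw [hsym]
    exact (span_le (p := LinearMap.ker (B x))).mpr hxpq hy₀P
  obtain ⟨kx, hkx, heL⟩ := exists_nat_smul_mem_span_int b hxQ
  have hwQ : ∃ c : Fin n → ℚ, w = ∑ j, (c j : ℝ) • b j := by
    rcases hw with rfl | rfl <;> assumption
  obtain ⟨kw, hkw, hwL⟩ := exists_nat_smul_mem_span_int b hwQ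
  set e := (kx : ℝ) • x
  set f := isotropicPartner B e ((kw : ℝ) • w)
  have he : B e e = 0 := by simp [e, hxiso]
  have hef : B e f ≠ 0 := by
    rw [apply_isotropicPartner he]
    simp [e, hxw, hkx.ne', hkw.ne']
  have hP : span ℝ {e, f} = span ℝ {p, q} :=
    span_pair_eq_of_linearIndependent (linearIndependent_pair_of_isotropic he hef)
      (smul_mem _ _ hxP) (sub_mem (smul_mem _ _ (smul_mem _ _ hxP))
        (smul_mem _ _ (smul_mem _ _ (subset_span hw))))
  refine (finite_setOf_orthogonal_in_isotropic_plane hsym hsig b hint heL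
    (isotropicPartner_mem_span_int hint heL hwL) he (isotropicPartner_apply_self hsym he _)
    hef N).subset ?_
  rintro v ⟨hvL, hvN, y, hyP, hvy, hyy, -⟩
  exact ⟨hvL, hvN, y, hP ▸ hyP, hvy, hyy⟩

/-- Λ a lattice of signature (1,n−1), C⁺ a connected component of the positive
cone, P a rational 2-plane containing a nonzero rational isotropic vector. Then for any
positive integer N the set {v ∈ Λ : (v,v) > −N and v^⊥ ∩ P ∩ C⁺ ≠ ∅} is finite. -/
theorem stmt3 (n : ℕ)
    (B : EuclideanSpace ℝ (Fin n) →ₗ[ℝ] EuclideanSpace ℝ (Fin n) →ₗ[ℝ] ℝ)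
    (hsym : ∀ x y, B x y = B y x)
    (hnd : ∀ x, (∀ y, B x y = 0) → x = 0)
    (hsig : ∀ x, 0 < B x x → ∀ y, y ≠ 0 → B x y = 0 → B y y < 0)
    (b : Module.Basis (Fin n) ℝ (EuclideanSpace ℝ (Fin n)))
    (hint : ∀ i j, ∃ m : ℤ, B (b i) (b j) = (m : ℝ))
    (h : EuclideanSpace ℝ (Fin n))
    (hhL : h ∈ Submodule.span ℤ (Set.range b)) (hh : 0 < B h h)
    -- the rational 2-plane P, spanned by rational vectors p, q
    (p q : EuclideanSpace ℝ (Fin n))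
    (hpQ : ∃ c : Fin n → ℚ, p = ∑ j, (c j : ℝ) • b j)
    (hqQ : ∃ c : Fin n → ℚ, q = ∑ j, (c j : ℝ) • b j)
    (hpq : LinearIndependent ℝ ![p, q])
    -- a nonzero rational isotropic vector of P
    (x : EuclideanSpace ℝ (Fin n))
    (hxP : x ∈ Submodule.span ℝ ({p, q} : Set (EuclideanSpace ℝ (Fin n))))
    (hxQ : ∃ c : Fin n → ℚ, x = ∑ j, (c j : ℝ) • b j)
    (hx0 : x ≠ 0) (hxiso : B x x = 0)
    (N : ℕ) (hN : 0 < N) :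
    {v : EuclideanSpace ℝ (Fin n) | v ∈ Submodule.span ℤ (Set.range b) ∧
      -(N : ℝ) < B v v ∧
      ∃ y, y ∈ Submodule.span ℝ ({p, q} : Set (EuclideanSpace ℝ (Fin n))) ∧
        B v y = 0 ∧ 0 < B y y ∧ 0 < B y h}.Finite :=
  stmt3_general n B hsym hsig b hint h p q hpQ hqQ x hxP hxQ hx0 hxiso N
end

section
/- Let Λ be a lattice of signature (1, n−1) with positive cone component C⁺, and let x₁, x₂ ∈ Λ ∩ C⁺ be linearly independent. Then for any positive integer N, the set {v ∈ Λ : (v,v) > −N and (v, s·x₁ + (1−s)·x₂) = 0 for some s ∈ [0,1]} is finite. -/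
/-!
For `x, y` in the positive cone, the vector `(h, y) x - (h, x) y` is orthogonal to `h`, hence has
non-positive square; expanding gives `(x, y) > 0`, so the positive cone is convex and contains the
segment `[x₁, x₂]`. Every nonzero `v` orthogonal to a point of the segment therefore has `(v, v) < 0`,
and by compactness of the segment and of the unit sphere `(v, v) ≤ -ε ‖v‖²` for a uniform `ε > 0`.
The vectors in question thus lie in a ball, which meets the lattice in a finite set.
-/

open Set Submodule

variable {E : Type*} [NormedAddCommGroup E] [NormedSpace ℝ E]

section PosCone

variable {B : E →ₗ[ℝ] E →ₗ[ℝ] ℝ}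

variable (B) in
def posCone (h : E) : Set E := {x | 0 < B x x ∧ 0 < B x h}

theorem apply_pos_of_mem_posCone (hsym : ∀ x y, B x y = B y x)
    (hsig : ∀ x, 0 < B x x → ∀ y, y ≠ 0 → B x y = 0 → B y y < 0)
    {h x y : E} (hh : 0 < B h h) (hx : x ∈ posCone B h) (hy : y ∈ posCone B h) :
    0 < B x y := by
  obtain ⟨hxx, hxh⟩ := hx
  obtain ⟨hyy, hyh⟩ := hy
  rw [hsym] at hxh hyh
  set z := B h y • x - B h x • y
  have hz : B h z = 0 := by
    simp only [z, map_sub, map_smul, smul_eq_mul]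
    ring
  have hzz : B z z ≤ 0 := by
    rcases eq_or_ne z 0 with hz0 | hz0
    · simp [hz0]
    · exact (hsig h hh z hz0 hz).le
  have expand : B z z = B h y ^ 2 * B x x - 2 * (B h x * B h y) * B x y + B h x ^ 2 * B y y := by
    simp only [z, map_sub, map_smul, LinearMap.sub_apply, LinearMap.smul_apply, smul_eq_mul,
      hsym y x]
    ring
  have : 0 < 2 * (B h x * B h y) * B x y := by
    nlinarith [mul_pos (pow_pos hyh 2) hxx, mul_pos (pow_pos hxh 2) hyy]
  exact pos_of_mul_pos_right this (by positivity)

theorem convex_posCone (hsym : ∀ x y, B x y = B y x)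
    (hsig : ∀ x, 0 < B x x → ∀ y, y ≠ 0 → B x y = 0 → B y y < 0)
    {h : E} (hh : 0 < B h h) : Convex ℝ (posCone B h) := by
  intro x hx y hy a c ha hc hac
  have hxy := apply_pos_of_mem_posCone hsym hsig hh hx hy
  obtain ⟨hxx, hxh⟩ := hx
  obtain ⟨hyy, hyh⟩ := hy
  have hmix : ∀ {p q : ℝ}, 0 < p → 0 < q → 0 < a * p + c * q :=
    fun hp hq => convex_Ioi (0 : ℝ) hp hq ha hc hac
  constructor
  · have expand : B (a • x + c • y) (a • x + c • y)
        = a * (a * B x x + c * B x y) + c * (a * B x y + c * B y y) := by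
      simp only [map_add, map_smul, LinearMap.add_apply, LinearMap.smul_apply, smul_eq_mul,
        hsym y x]
    rw [expand]
    exact hmix (hmix hxx hxy) (hmix hxy hyy)
  · simp only [map_add, map_smul, LinearMap.add_apply, LinearMap.smul_apply, smul_eq_mul]
    exact hmix hxh hyh

end PosCone

theorem isCompact_segment (x y : E) : IsCompact (segment ℝ x y) :=
  segment_eq_image ℝ x y ▸ isCompact_Icc.image (by fun_prop)

section Compactness

variable [FiniteDimensional ℝ E] (B : E →ₗ[ℝ] E →ₗ[ℝ] ℝ) {K : Set E}

theorem exists_pos_mul_norm_sq_le_neg_apply_self (hK : IsCompact K)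
    (hneg : ∀ k ∈ K, ∀ v, v ≠ 0 → B v k = 0 → B v v < 0) :
    ∃ ε > 0, ∀ k ∈ K, ∀ v, B v k = 0 → ε * ‖v‖ ^ 2 ≤ -B v v := by
  have hB : Continuous fun p : E × E => B p.1 p.2 := B.toContinuousBilinearMap.continuous₂
  set S := (K ×ˢ Metric.sphere (0 : E) 1) ∩ {p | B p.2 p.1 = 0}
  have hS : IsCompact S :=
    (hK.prod (isCompact_sphere 0 1)).inter_right <| isClosed_eq
      (hB.comp (continuous_snd.prodMk continuous_fst)) continuous_const
  have hpos : ∀ p ∈ S, (0 : ℝ) < -B p.2 p.2 := by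
    rintro ⟨k, u⟩ ⟨⟨hk, hu⟩, huk⟩
    exact neg_pos.mpr <| hneg k hk u (ne_zero_of_mem_unit_sphere ⟨u, hu⟩) huk
  obtain ⟨ε, hε, hεS⟩ := hS.exists_forall_le' ((hB.comp
    (continuous_snd.prodMk continuous_snd)).neg.continuousOn) hpos
  refine ⟨ε, hε, fun k hk v hvk => ?_⟩
  rcases eq_or_ne v 0 with rfl | hv
  · simp
  set u := ‖v‖⁻¹ • v
  have hvu : v = ‖v‖ • u := (smul_inv_smul₀ (norm_ne_zero_iff.mpr hv) v).symm
  have hu : ‖u‖ = 1 := norm_smul_inv_norm hv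
  have huk : B u k = 0 := by simp [u, hvk]
  have hεu : ε ≤ -B u u := hεS (k, u) ⟨⟨hk, by simpa using hu⟩, huk⟩
  calc ε * ‖v‖ ^ 2 ≤ -B u u * ‖v‖ ^ 2 := by gcongr
    _ = -B v v := by
      rw [hvu]
      simp only [map_smul, LinearMap.smul_apply, smul_eq_mul, norm_smul, norm_norm, hu]
      ring

theorem finite_setOf_mem_span_neg_lt_apply_self {ι : Type*} (b : Module.Basis ι ℝ E)
    (hK : IsCompact K) (hneg : ∀ k ∈ K, ∀ v, v ≠ 0 → B v k = 0 → B v v < 0) (c : ℝ) :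
    {v | v ∈ span ℤ (range b) ∧ -c < B v v ∧ ∃ k ∈ K, B v k = 0}.Finite := by
  have := Module.Finite.finite_basis b
  obtain ⟨ε, hε, hbound⟩ := exists_pos_mul_norm_sq_le_neg_apply_self B hK hneg
  refine (ZSpan.setFinite_inter b (Metric.isBounded_closedBall
    (x := 0) (r := √(c / ε)))).subset ?_
  rintro v ⟨hvL, hvc, k, hk, hvk⟩
  refine ⟨?_, hvL⟩
  have : ‖v‖ ^ 2 ≤ c / ε := by
    rw [le_div_iff₀ hε]
    linarith [hbound k hk v hvk]
  simpa using Real.abs_le_sqrt this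

end Compactness

theorem stmt4_general (n : ℕ)
    (B : EuclideanSpace ℝ (Fin n) →ₗ[ℝ] EuclideanSpace ℝ (Fin n) →ₗ[ℝ] ℝ)
    (hsym : ∀ x y, B x y = B y x)
    (hsig : ∀ x, 0 < B x x → ∀ y, y ≠ 0 → B x y = 0 → B y y < 0)
    (b : Module.Basis (Fin n) ℝ (EuclideanSpace ℝ (Fin n)))
    (h : EuclideanSpace ℝ (Fin n))
    (hh : 0 < B h h)
    (x₁ x₂ : EuclideanSpace ℝ (Fin n))
    (hx₁C : 0 < B x₁ x₁ ∧ 0 < B x₁ h)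
    (hx₂C : 0 < B x₂ x₂ ∧ 0 < B x₂ h)
    (N : ℕ) :
    {v : EuclideanSpace ℝ (Fin n) | v ∈ Submodule.span ℤ (Set.range b) ∧
      -(N : ℝ) < B v v ∧
      ∃ s : ℝ, s ∈ Set.Icc (0 : ℝ) 1 ∧ B v (s • x₁ + (1 - s) • x₂) = 0}.Finite := by
  have hneg : ∀ k ∈ segment ℝ x₁ x₂, ∀ v, v ≠ 0 → B v k = 0 → B v v < 0 :=
    fun k hk v hv hvk => hsig k ((convex_posCone hsym hsig hh).segment_subset hx₁C hx₂C hk).1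
      v hv (by rwa [hsym])
  refine (finite_setOf_mem_span_neg_lt_apply_self B b (isCompact_segment x₁ x₂) hneg N).subset ?_
  rintro v ⟨hvL, hvN, s, ⟨hs₀, hs₁⟩, hvs⟩
  exact ⟨hvL, hvN, _, ⟨s, 1 - s, hs₀, by linarith, by ring, rfl⟩, hvs⟩

/-- For x₁, x₂ ∈ Λ ∩ C⁺ linearly independent, and N > 0, the set
{v ∈ Λ : (v,v) > −N and (v, s·x₁ + (1−s)·x₂) = 0 for some s ∈ [0,1]} is finite. -/
theorem stmt4 (n : ℕ)
    (B : EuclideanSpace ℝ (Fin n) →ₗ[ℝ] EuclideanSpace ℝ (Fin n) →ₗ[ℝ] ℝ)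
    (hsym : ∀ x y, B x y = B y x)
    (hnd : ∀ x, (∀ y, B x y = 0) → x = 0)
    (hsig : ∀ x, 0 < B x x → ∀ y, y ≠ 0 → B x y = 0 → B y y < 0)
    (b : Module.Basis (Fin n) ℝ (EuclideanSpace ℝ (Fin n)))
    (hint : ∀ i j, ∃ m : ℤ, B (b i) (b j) = (m : ℝ))
    (h : EuclideanSpace ℝ (Fin n))
    (hhL : h ∈ Submodule.span ℤ (Set.range b)) (hh : 0 < B h h)
    (x₁ x₂ : EuclideanSpace ℝ (Fin n))
    (hx₁L : x₁ ∈ Submodule.span ℤ (Set.range b))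
    (hx₂L : x₂ ∈ Submodule.span ℤ (Set.range b))
    (hx₁C : 0 < B x₁ x₁ ∧ 0 < B x₁ h)
    (hx₂C : 0 < B x₂ x₂ ∧ 0 < B x₂ h)
    (hind : LinearIndependent ℝ ![x₁, x₂])
    (N : ℕ) (hN : 0 < N) :
    {v : EuclideanSpace ℝ (Fin n) | v ∈ Submodule.span ℤ (Set.range b) ∧
      -(N : ℝ) < B v v ∧
      ∃ s : ℝ, s ∈ Set.Icc (0 : ℝ) 1 ∧ B v (s • x₁ + (1 - s) • x₂) = 0}.Finite :=
  stmt4_general n B hsym hsig b h hh x₁ x₂ hx₁C hx₂C N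
end
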